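/- In any cut-free derivation in !L* of a sequent of size n in which ! is applied only to variables, the number of applications of the contraction rule is less than 2n. -/

import Mathlib

/-!
Count the axiom leaves of a derivation in two ways. Antecedent length is additive at a left
division rule, drops by one at a right division rule and at contraction, and is preserved by the
other rules; an axiom has one antecedent formula. Hence leaves = |Φ| + #contractions + #right
division rules, while the derivation, a binary tree, has #left division rules + 1 leaves. Each
division rule introduces an occurrence of `/` or `\` of the end sequent, none of them duplicated
by contraction because `!` guards only variables. So the number of contractions is at most the
number of divisions in the end sequent plus one, which is at most its size.
-/

/-- Formulae (types) of the Lambek calculus with a modality: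
`var` = primitive type, `div B A` = B / A, `ldiv A B` = A \ B, `bang A` = !A. -/
inductive Fm : Type
  | var : ℕ → Fm
  | div : Fm → Fm → Fm
  | ldiv : Fm → Fm → Fm
  | bang : Fm → Fm
  deriving DecidableEq

open Fm

/-- The size of a formula: the total number of variable and connective occurrences. -/
def Fm.size : Fm → ℕ
  | var _ => 1
  | div a b => a.size + b.size + 1
  | ldiv a b => a.size + b.size + 1
  | bang a => a.size + 1

/-- The size of a sequent Φ → C. -/
def seqSize (Φ : List Fm) (C : Fm) : ℕ := (Φ.map Fm.size).sum + C.size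

/-- `!` is applied only to variables (primitive types) in the formula. -/
def bangVar : Fm → Prop
  | var _ => True
  | div a b => bangVar a ∧ bangVar b
  | ldiv a b => bangVar a ∧ bangVar b
  | bang a => ∃ n : ℕ, a = var n

/-- Cut-free derivation trees in !L*. -/
inductive BangD : List Fm → Fm → Type
  | ax (A : Fm) : BangD [A] A
  | divL (Γ Δ₁ Δ₂ : List Fm) (A B C : Fm) :
      BangD Γ A → BangD (Δ₁ ++ B :: Δ₂) C →
      BangD (Δ₁ ++ div B A :: (Γ ++ Δ₂)) C
  | divR (Γ : List Fm) (A B : Fm) :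
      BangD (Γ ++ [A]) B → BangD Γ (div B A)
  | ldivL (Γ Δ₁ Δ₂ : List Fm) (A B C : Fm) :
      BangD Γ A → BangD (Δ₁ ++ B :: Δ₂) C →
      BangD (Δ₁ ++ Γ ++ ldiv A B :: Δ₂) C
  | ldivR (Γ : List Fm) (A B : Fm) :
      BangD (A :: Γ) B → BangD Γ (ldiv A B)
  | bangL (Γ₁ Γ₂ : List Fm) (A C : Fm) :
      BangD (Γ₁ ++ A :: Γ₂) C → BangD (Γ₁ ++ bang A :: Γ₂) C
  | bangR (Γ : List Fm) (B : Fm) :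
      BangD (Γ.map bang) B → BangD (Γ.map bang) (bang B)
  | perm1 (Δ₁ Γ Δ₂ : List Fm) (A C : Fm) :
      BangD (Δ₁ ++ bang A :: (Γ ++ Δ₂)) C → BangD (Δ₁ ++ Γ ++ bang A :: Δ₂) C
  | perm2 (Δ₁ Γ Δ₂ : List Fm) (A C : Fm) :
      BangD (Δ₁ ++ Γ ++ bang A :: Δ₂) C → BangD (Δ₁ ++ bang A :: (Γ ++ Δ₂)) C
  | contr (Δ₁ Δ₂ : List Fm) (A C : Fm) :
      BangD (Δ₁ ++ bang A :: bang A :: Δ₂) C → BangD (Δ₁ ++ bang A :: Δ₂) C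

/-- Number of applications of logical rules (all rules except permutation and contraction). -/
def BangD.logicalCount : ∀ {Φ : List Fm} {C : Fm}, BangD Φ C → ℕ
  | _, _, BangD.ax _ => 0
  | _, _, BangD.divL _ _ _ _ _ _ d e => d.logicalCount + e.logicalCount + 1
  | _, _, BangD.divR _ _ _ d => d.logicalCount + 1
  | _, _, BangD.ldivL _ _ _ _ _ _ d e => d.logicalCount + e.logicalCount + 1
  | _, _, BangD.ldivR _ _ _ d => d.logicalCount + 1
  | _, _, BangD.bangL _ _ _ _ d => d.logicalCount + 1
  | _, _, BangD.bangR _ _ d => d.logicalCount + 1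
  | _, _, BangD.perm1 _ _ _ _ _ d => d.logicalCount
  | _, _, BangD.perm2 _ _ _ _ _ d => d.logicalCount
  | _, _, BangD.contr _ _ _ _ d => d.logicalCount

/-- Number of applications of the contraction rule. -/
def BangD.contrCount : ∀ {Φ : List Fm} {C : Fm}, BangD Φ C → ℕ
  | _, _, BangD.ax _ => 0
  | _, _, BangD.divL _ _ _ _ _ _ d e => d.contrCount + e.contrCount
  | _, _, BangD.divR _ _ _ d => d.contrCount
  | _, _, BangD.ldivL _ _ _ _ _ _ d e => d.contrCount + e.contrCount
  | _, _, BangD.ldivR _ _ _ d => d.contrCount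
  | _, _, BangD.bangL _ _ _ _ d => d.contrCount
  | _, _, BangD.bangR _ _ d => d.contrCount
  | _, _, BangD.perm1 _ _ _ _ _ d => d.contrCount
  | _, _, BangD.perm2 _ _ _ _ _ d => d.contrCount
  | _, _, BangD.contr _ _ _ _ d => d.contrCount + 1

/-- The total size of a derivation: the number of axiom instances and rule
applications (i.e. of sequent occurrences) in it. -/
def BangD.dsize : ∀ {Φ : List Fm} {C : Fm}, BangD Φ C → ℕ
  | _, _, BangD.ax _ => 1
  | _, _, BangD.divL _ _ _ _ _ _ d e => d.dsize + e.dsize + 1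
  | _, _, BangD.divR _ _ _ d => d.dsize + 1
  | _, _, BangD.ldivL _ _ _ _ _ _ d e => d.dsize + e.dsize + 1
  | _, _, BangD.ldivR _ _ _ d => d.dsize + 1
  | _, _, BangD.bangL _ _ _ _ d => d.dsize + 1
  | _, _, BangD.bangR _ _ d => d.dsize + 1
  | _, _, BangD.perm1 _ _ _ _ _ d => d.dsize + 1
  | _, _, BangD.perm2 _ _ _ _ _ d => d.dsize + 1
  | _, _, BangD.contr _ _ _ _ d => d.dsize + 1

def Fm.divCount : Fm → ℕ
  | var _ => 0
  | div a b => a.divCount + b.divCount + 1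
  | ldiv a b => a.divCount + b.divCount + 1
  | bang a => a.divCount

theorem Fm.divCount_lt_size (F : Fm) : F.divCount < F.size := by
  induction F <;> simp only [divCount, size] <;> omega

theorem sum_divCount_add_divCount_lt_seqSize (Φ : List Fm) (C : Fm) :
    (Φ.map Fm.divCount).sum + C.divCount < seqSize Φ C :=
  Nat.add_lt_add_of_le_of_lt
    (List.sum_le_sum fun F _ => (Fm.divCount_lt_size F).le) (Fm.divCount_lt_size C)

namespace BangD

def rightDivCount : ∀ {Φ : List Fm} {C : Fm}, BangD Φ C → ℕ
  | _, _, ax _ => 0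
  | _, _, divL _ _ _ _ _ _ d e => d.rightDivCount + e.rightDivCount
  | _, _, divR _ _ _ d => d.rightDivCount + 1
  | _, _, ldivL _ _ _ _ _ _ d e => d.rightDivCount + e.rightDivCount
  | _, _, ldivR _ _ _ d => d.rightDivCount + 1
  | _, _, bangL _ _ _ _ d => d.rightDivCount
  | _, _, bangR _ _ d => d.rightDivCount
  | _, _, perm1 _ _ _ _ _ d => d.rightDivCount
  | _, _, perm2 _ _ _ _ _ d => d.rightDivCount
  | _, _, contr _ _ _ _ d => d.rightDivCount

def leftDivCount : ∀ {Φ : List Fm} {C : Fm}, BangD Φ C → ℕ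
  | _, _, ax _ => 0
  | _, _, divL _ _ _ _ _ _ d e => d.leftDivCount + e.leftDivCount + 1
  | _, _, divR _ _ _ d => d.leftDivCount
  | _, _, ldivL _ _ _ _ _ _ d e => d.leftDivCount + e.leftDivCount + 1
  | _, _, ldivR _ _ _ d => d.leftDivCount
  | _, _, bangL _ _ _ _ d => d.leftDivCount
  | _, _, bangR _ _ d => d.leftDivCount
  | _, _, perm1 _ _ _ _ _ d => d.leftDivCount
  | _, _, perm2 _ _ _ _ _ d => d.leftDivCount
  | _, _, contr _ _ _ _ d => d.leftDivCount

theorem length_add_contrCount_add_rightDivCount {Φ : List Fm} {C : Fm} (d : BangD Φ C) :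
    Φ.length + d.contrCount + d.rightDivCount = d.leftDivCount + 1 := by
  induction d <;>
    simp only [contrCount, rightDivCount, leftDivCount, List.length_append, List.length_cons,
      List.length_nil, List.length_map] at * <;>
    omega

theorem leftDivCount_add_rightDivCount_le {Φ : List Fm} {C : Fm} (d : BangD Φ C)
    (h : ∀ F ∈ C :: Φ, bangVar F) :
    d.leftDivCount + d.rightDivCount ≤ (Φ.map Fm.divCount).sum + C.divCount := by
  induction d with
  | ax A => simp [leftDivCount, rightDivCount]
  | bangL _ _ A _ _ ih | contr _ _ A _ _ ih =>
    simp only [List.forall_mem_cons, List.forall_mem_append] at h ih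
    obtain ⟨n, rfl⟩ : ∃ n, A = var n := h.2.2.1
    have := ih (by simp_all [bangVar])
    simp_all [leftDivCount, rightDivCount, Fm.divCount]
  | bangR _ B _ ih =>
    obtain ⟨n, rfl⟩ : ∃ n, B = var n := h _ List.mem_cons_self
    have := ih (by simp_all [bangVar])
    simp_all [leftDivCount, rightDivCount, Fm.divCount]
  | _ =>
    simp only [List.forall_mem_cons, List.forall_mem_append, bangVar] at *
    simp_all only [implies_true, and_self, forall_const, List.not_mem_nil, IsEmpty.forall_iff,
      List.append_assoc, List.map_append, List.map_cons, List.map_nil, List.sum_append,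
      List.sum_cons, List.sum_nil, add_zero, leftDivCount, rightDivCount, Fm.divCount]
    omega

end BangD

/-- In any cut-free !L* derivation of a sequent of size n in which ! is applied
only to variables, the number of contraction applications is less than 2n. -/
theorem stmt13 (Φ : List Fm) (C : Fm) (d : BangD Φ C)
    (h : ∀ F ∈ C :: Φ, bangVar F) :
    d.contrCount < 2 * seqSize Φ C := by
  have hlength := d.length_add_contrCount_add_rightDivCount
  have hdivs := d.leftDivCount_add_rightDivCount_le h
  have hsize := sum_divCount_add_divCount_lt_seqSize Φ C
  omega
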